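/- Let X = (ℝ₊)³ where ℝ₊ is the set of positive real numbers, with elements of X written as triples (x₁,x₂,x₃). Define T̃ : X³ → X³ by T̃((x₁,x₂,x₃),(y₁,y₂,y₃),(z₁,z₂,z₃)) = ((u₁,u₂,u₃),(v₁,v₂,v₃),(w₁,w₂,w₃)) with u₁ = x₁, u₂ = x₂x₃y₁/(x₁y₃z₂ + x₃z₁), u₃ = (x₁y₃z₂ + x₃z₁)/y₁, v₁ = y₁, v₂ = y₂y₃/(x₃z₃), v₃ = x₃z₃, w₁ = z₁, w₂ = y₂(x₁y₃z₂ + x₃z₁)/(x₂x₃y₁), w₃ = x₂x₃y₁z₂z₃/(x₁y₂y₃z₂ + x₃y₂z₁). Then T̃ satisfies the tetrahedron equation T¹²³ ∘ T¹⁴⁵ ∘ T²⁴⁶ ∘ T³⁵⁶ = T³⁵⁶ ∘ T²⁴⁶ ∘ T¹⁴⁵ ∘ T¹²³ on X⁶, and the six functions I₁ = x₁, I₂ = y₁, I₃ = z₁, I₄ = x₂x₃, I₅ = y₂y₃, I₆ = z₂z₃ are invariants of T̃ (Iⱼ ∘ T̃ = Iⱼ). -/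

import Mathlib

noncomputable section

section Tetra

variable {X : Type*}

/-- `T` acting on factors 1,2,3 of `X⁶`. -/
def lift123 (T : X × X × X → X × X × X) :
    X × X × X × X × X × X → X × X × X × X × X × X
  | (a, b, c, d, e, f) =>
    match T (a, b, c) with
    | (a', b', c') => (a', b', c', d, e, f)

/-- `T` acting on factors 1,4,5 of `X⁶`. -/
def lift145 (T : X × X × X → X × X × X) :
    X × X × X × X × X × X → X × X × X × X × X × X
  | (a, b, c, d, e, f) =>
    match T (a, d, e) with
    | (a', d', e') => (a', b, c, d', e', f)

/-- `T` acting on factors 2,4,6 of `X⁶`. -/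
def lift246 (T : X × X × X → X × X × X) :
    X × X × X × X × X × X → X × X × X × X × X × X
  | (a, b, c, d, e, f) =>
    match T (b, d, f) with
    | (b', d', f') => (a, b', c, d', e, f')

/-- `T` acting on factors 3,5,6 of `X⁶`. -/
def lift356 (T : X × X × X → X × X × X) :
    X × X × X × X × X × X → X × X × X × X × X × X
  | (a, b, c, d, e, f) =>
    match T (c, e, f) with
    | (c', e', f') => (a, b, c', d, e', f')

/-- The Zamolodchikov tetrahedron equation for a map `T : X³ → X³`. -/
def IsTetrahedronMap (T : X × X × X → X × X × X) : Prop :=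
  lift123 T ∘ lift145 T ∘ lift246 T ∘ lift356 T =
    lift356 T ∘ lift246 T ∘ lift145 T ∘ lift123 T

end Tetra

/-- The positive real numbers. -/
abbrev PReal : Type := { r : ℝ // 0 < r }

/-- `X = (ℝ₊)³`. -/
abbrev Xp : Type := PReal × PReal × PReal

/-- The nine-dimensional map `T̃` of Theorem `thtiltc9`. -/
def Tt : Xp × Xp × Xp → Xp × Xp × Xp :=
  fun ((x1, x2, x3), (y1, y2, y3), (z1, z2, z3)) =>
    ((x1,
      x2 * x3 * y1 / (x1 * y3 * z2 + x3 * z1),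
      (x1 * y3 * z2 + x3 * z1) / y1),
     (y1,
      y2 * y3 / (x3 * z3),
      x3 * z3),
     (z1,
      y2 * (x1 * y3 * z2 + x3 * z1) / (x2 * x3 * y1),
      x2 * x3 * y1 * z2 * z3 / (x1 * y2 * y3 * z2 + x3 * y2 * z1)))

def I1 : Xp × Xp × Xp → ℝ := fun ((x1, _, _), _, _) => (x1 : ℝ)
def I2 : Xp × Xp × Xp → ℝ := fun (_, (y1, _, _), _) => (y1 : ℝ)
def I3 : Xp × Xp × Xp → ℝ := fun (_, _, (z1, _, _)) => (z1 : ℝ)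
def I4 : Xp × Xp × Xp → ℝ := fun ((_, x2, x3), _, _) => (x2 : ℝ) * (x3 : ℝ)
def I5 : Xp × Xp × Xp → ℝ := fun (_, (_, y2, y3), _) => (y2 : ℝ) * (y3 : ℝ)
def I6 : Xp × Xp × Xp → ℝ := fun (_, _, (_, z2, z3)) => (z2 : ℝ) * (z3 : ℝ)

/-!
`Tt` copies the first coordinates and, writing `a = x₁y₃z₂ + x₃z₁`, multiplies the third and
divides the second entry of `(x₂, x₃)`, `(y₂, y₃)`, `(z₂, z₃)` by `a/(x₃y₁)`, `x₃z₃/y₃` and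
`x₂x₃y₁z₂/(y₂a)` respectively, so the six functions are invariant.
The tetrahedron equation is a direct computation: both sides are rational in 18 positive
variables, and clearing the positive denominators turns each of the 18 coordinate identities
into a polynomial identity.
-/lemma PReal.coe_div (a b : PReal) : ((a / b : PReal) : ℝ) = a / b := rfl

theorem I1_comp_Tt : I1 ∘ Tt = I1 := rfl
theorem I2_comp_Tt : I2 ∘ Tt = I2 := rfl
theorem I3_comp_Tt : I3 ∘ Tt = I3 := rfl

theorem I4_comp_Tt : I4 ∘ Tt = I4 := by
  funext ⟨⟨⟨x1, hx1⟩, ⟨x2, hx2⟩, ⟨x3, hx3⟩⟩, ⟨⟨y1, hy1⟩, ⟨y2, hy2⟩, ⟨y3, hy3⟩⟩,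
    ⟨⟨z1, hz1⟩, ⟨z2, hz2⟩, ⟨z3, hz3⟩⟩⟩
  simp only [Function.comp_apply, Tt, I4, PReal.coe_div, Positive.val_mul, Positive.coe_add]
  field_simp

theorem I5_comp_Tt : I5 ∘ Tt = I5 := by
  funext ⟨⟨⟨x1, hx1⟩, ⟨x2, hx2⟩, ⟨x3, hx3⟩⟩, ⟨⟨y1, hy1⟩, ⟨y2, hy2⟩, ⟨y3, hy3⟩⟩,
    ⟨⟨z1, hz1⟩, ⟨z2, hz2⟩, ⟨z3, hz3⟩⟩⟩
  simp only [Function.comp_apply, Tt, I5, PReal.coe_div, Positive.val_mul]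
  field_simp

theorem I6_comp_Tt : I6 ∘ Tt = I6 := by
  funext ⟨⟨⟨x1, hx1⟩, ⟨x2, hx2⟩, ⟨x3, hx3⟩⟩, ⟨⟨y1, hy1⟩, ⟨y2, hy2⟩, ⟨y3, hy3⟩⟩,
    ⟨⟨z1, hz1⟩, ⟨z2, hz2⟩, ⟨z3, hz3⟩⟩⟩
  simp only [Function.comp_apply, Tt, I6, PReal.coe_div, Positive.val_mul, Positive.coe_add]
  field_simp

theorem Tt_isTetrahedronMap : IsTetrahedronMap Tt := by
  funext ⟨⟨⟨x1, hx1⟩, ⟨x2, hx2⟩, ⟨x3, hx3⟩⟩, ⟨⟨y1, hy1⟩, ⟨y2, hy2⟩, ⟨y3, hy3⟩⟩,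
    ⟨⟨z1, hz1⟩, ⟨z2, hz2⟩, ⟨z3, hz3⟩⟩, ⟨⟨u1, hu1⟩, ⟨u2, hu2⟩, ⟨u3, hu3⟩⟩,
    ⟨⟨v1, hv1⟩, ⟨v2, hv2⟩, ⟨v3, hv3⟩⟩, ⟨⟨w1, hw1⟩, ⟨w2, hw2⟩, ⟨w3, hw3⟩⟩⟩
  simp only [Function.comp_apply, lift123, lift145, lift246, lift356, Tt, Prod.mk.injEq,
    Subtype.ext_iff, true_and, PReal.coe_div, Positive.val_mul, Positive.coe_add]
  and_intros <;> field_simp <;> ring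

theorem Tt_tetrahedron_invariants :
    IsTetrahedronMap Tt ∧
    (I1 ∘ Tt = I1) ∧ (I2 ∘ Tt = I2) ∧ (I3 ∘ Tt = I3) ∧
    (I4 ∘ Tt = I4) ∧ (I5 ∘ Tt = I5) ∧ (I6 ∘ Tt = I6) :=
  ⟨Tt_isTetrahedronMap, I1_comp_Tt, I2_comp_Tt, I3_comp_Tt, I4_comp_Tt, I5_comp_Tt, I6_comp_Tt⟩
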